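/- The only pair of coprime integers (r,s) with r > s > 1 for which rs/(rs - r - s) is an integer is (r,s) = (3,2), where the value is 6. -/
import Mathlib


theorem stmt_8 (r s : ℤ) (hs : 1 < s) (hr : s < r) (hco : IsCoprime r s) :
    ((∃ k : ℤ, ((r : ℝ) * s) / ((r : ℝ) * s - r - s) = k) ↔ (r = 3 ∧ s = 2)) ∧
    ((3 * 2 : ℝ) / (3 * 2 - 3 - 2) = 6) := by
  have hs2 : (2 : ℤ) ≤ s := hs
  have hr3 : (3 : ℤ) ≤ r := by omega
  set d : ℤ := r * s - r - s with hd
  have hdpos : 1 ≤ d := by nlinarith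
  have hdcast : ((d : ℝ)) = (r : ℝ) * s - r - s := by push_cast [hd]; ring
  have hdR : ((r : ℝ) * s - r - s) ≠ 0 := by
    rw [← hdcast]
    exact_mod_cast (by omega : d ≠ 0)
  refine ⟨⟨?_, ?_⟩, by norm_num⟩
  · rintro ⟨k, hk⟩
    have heq : (r * s : ℤ) = k * d := by
      have h := (div_eq_iff hdR).mp hk
      rw [← hdcast] at h
      exact_mod_cast h
    have hdvd : d ∣ r * s := ⟨k, by linarith [heq, mul_comm k d]⟩
    have c1 : IsCoprime d r := by
      have h1 : IsCoprime (-s) r := hco.symm.neg_left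
      have h2 := h1.add_mul_right_left (s - 1)
      have h3 : -s + (s - 1) * r = d := by rw [hd]; ring
      rwa [h3] at h2
    have c2 : IsCoprime d s := by
      have h1 : IsCoprime (-r) s := hco.neg_left
      have h2 := h1.add_mul_right_left (r - 1)
      have h3 : -r + (r - 1) * s = d := by rw [hd]; ring
      rwa [h3] at h2
    have cd : IsCoprime d (r * s) := c1.mul_right c2
    have hu : IsUnit d := cd.isUnit_of_dvd hdvd
    have hd1 : d = 1 := by
      rcases Int.isUnit_iff.mp hu with h | h <;> omega
    have hs' : s = 2 := by nlinarith
    have hr' : r = 3 := by nlinarith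
    exact ⟨hr', hs'⟩
  · rintro ⟨hr', hs'⟩
    subst hr' hs'
    exact ⟨6, by norm_num⟩
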